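/- arXiv:1903.03600 — 3 statements merged into one kernel-verified Lean document; each statement's English description precedes it below -/
import Mathlib

section
/- The function U_U(φ) = φ·κ·W·log₂(1 + (1-φ)·h·Γ/(φ·(g·p + N₀))) - C_φ·φ is strictly concave in φ on (0,1), for any fixed jamming power p ≥ 0. -/
/-!
With `a = hΓ / (g p + N₀)` the argument of `log₂` is `(a + (1 - a) φ) / φ`, so the first term of
`U_U` is `φ f (y / φ)` with `f = κ W log₂` and `y = a + (1 - a) φ`: the perspective of the strictly
concave `f`, restricted to a line. Jensen's inequality for `f` with the weights `μ x / z`, `ν y / z`,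
where `z = μ x + ν y`, shows that such a perspective is strictly concave as soon as `a ≠ 0`, which
makes `y / φ = (1 - a) + a / φ` injective. Subtracting the linear cost `C_φ φ` keeps strict concavity.
-/

open Real Set

theorem StrictConcaveOn.const_mul {E : Type*} [AddCommGroup E] [Module ℝ E] {s : Set E}
    {f : E → ℝ} (hf : StrictConcaveOn ℝ s f) {c : ℝ} (hc : 0 < c) :
    StrictConcaveOn ℝ s fun x => c * f x := by
  refine ⟨hf.1, fun x hx y hy hxy a b ha hb hab => ?_⟩
  have := mul_lt_mul_of_pos_left (hf.2 hx hy hxy ha hb hab) hc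
  simp only [smul_eq_mul] at this ⊢
  linarith

theorem StrictConcaveOn.perspective {f : ℝ → ℝ} {s t : Set ℝ} {a b : ℝ}
    (hf : StrictConcaveOn ℝ s f) (ht : Convex ℝ t) (ht_pos : ∀ x ∈ t, 0 < x)
    (hmaps : MapsTo (fun x => (a + b * x) / x) t s) (ha : a ≠ 0) :
    StrictConcaveOn ℝ t fun x => x * f ((a + b * x) / x) := by
  refine ⟨ht, fun x hx y hy hxy μ ν hμ hν hμν => ?_⟩
  obtain rfl := eq_sub_of_add_eq' hμν
  simp only [smul_eq_mul]
  have hx0 := ht_pos x hx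
  have hy0 := ht_pos y hy
  set z := μ * x + (1 - μ) * y with hz
  have hz0 : 0 < z := by positivity
  have hne : (a + b * x) / x ≠ (a + b * y) / y := by
    rw [add_div, add_div, mul_div_cancel_right₀ b hx0.ne', mul_div_cancel_right₀ b hy0.ne']
    simpa [div_eq_mul_inv, ha] using hxy
  have hsplit : (a + b * z) / z =
      (μ * x / z) • ((a + b * x) / x) + ((1 - μ) * y / z) • ((a + b * y) / y) := by
    simp only [smul_eq_mul, hz]
    field_simp
    ring
  have hweights : μ * x / z + (1 - μ) * y / z = 1 := by
    rw [← add_div, div_self hz0.ne']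
  have key := hf.2 (hmaps hx) (hmaps hy) hne (by positivity) (by positivity) hweights
  rw [← hsplit] at key
  calc μ * (x * f ((a + b * x) / x)) + (1 - μ) * (y * f ((a + b * y) / y))
      = z * ((μ * x / z) • f ((a + b * x) / x) + ((1 - μ) * y / z) • f ((a + b * y) / y)) := by
        simp only [smul_eq_mul]
        field_simp
    _ < z * f ((a + b * z) / z) := mul_lt_mul_of_pos_left key hz0

theorem user_utility_strictly_concave_general
    (κ W h Γ g N₀ Cφ p : ℝ)
    (hκ : 0 < κ) (hW : 0 < W) (hh : 0 < h) (hΓ : 0 < Γ)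
    (hg : 0 < g) (hN : 0 < N₀) (hp : 0 ≤ p) :
    StrictConcaveOn ℝ (Set.Ioo (0:ℝ) 1)
      (fun φ => φ * κ * W * Real.logb 2 (1 + (1 - φ) * h * Γ / (φ * (g * p + N₀)))
        - Cφ * φ) := by
  have hD : 0 < g * p + N₀ := by positivity
  set a := h * Γ / (g * p + N₀)
  have ha : 0 < a := by positivity
  have hf : StrictConcaveOn ℝ (Ioi 0) fun u => κ * W / log 2 * log u :=
    strictConcaveOn_log_Ioi.const_mul (by positivity)
  have hmaps : MapsTo (fun φ => (a + (1 - a) * φ) / φ) (Ioo 0 1) (Ioi 0) := by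
    rintro φ ⟨hφ0, hφ1⟩
    have : 0 < a + (1 - a) * φ := by nlinarith
    exact div_pos this hφ0
  have hU : EqOn (fun φ => φ * (κ * W / log 2 * log ((a + (1 - a) * φ) / φ)))
      (fun φ => φ * κ * W * logb 2 (1 + (1 - φ) * h * Γ / (φ * (g * p + N₀)))) (Ioo 0 1) := by
    rintro φ ⟨hφ0, -⟩
    have : (a + (1 - a) * φ) / φ = 1 + (1 - φ) * h * Γ / (φ * (g * p + N₀)) := by
      simp only [a]
      field_simp
      ring
    simp only [this, logb]
    ring
  exact ((hf.perspective (convex_Ioo 0 1) (fun _ hφ => hφ.1) hmaps ha.ne').congr hU).sub_convexOn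
    ((LinearMap.mul ℝ ℝ Cφ).convexOn (convex_Ioo 0 1))

theorem user_utility_strictly_concave
    (κ W h Γ g N₀ Cφ p : ℝ)
    (hκ : 0 < κ) (hW : 0 < W) (hh : 0 < h) (hΓ : 0 < Γ)
    (hg : 0 < g) (hN : 0 < N₀) (hCφ : 0 ≤ Cφ) (hp : 0 ≤ p) :
    StrictConcaveOn ℝ (Set.Ioo (0:ℝ) 1)
      (fun φ => φ * κ * W * Real.logb 2 (1 + (1 - φ) * h * Γ / (φ * (g * p + N₀)))
        - Cφ * φ) :=
  user_utility_strictly_concave_general κ W h Γ g N₀ Cφ p hκ hW hh hΓ hg hN hp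
end

section
/- For fixed p ≥ 0, the user's utility U_U(φ) = (κW/ln2)·φ·log(1 + c(1-φ)/φ) − C_φ·φ with c = hΓ/(gp+N₀) satisfies U_U(φ) → 0 as φ → 0⁺; moreover, if C_φ < (κW/ln2)·(log(1+c) − c/(1+c)) then U_U has a strictly positive maximum on (0,1). -/
/-!
For `φ ∈ (0, 1]` and `c ≥ 0` the rate term `φ * log (1 + c * (1 - φ) / φ)` lies between `0`
and `φ * log (1 + c) - φ * log φ`, so it vanishes at `0⁺`, and hence so does `U_U`. Since
`log (1 + c * (1 - φ) / φ) → ∞` at `0⁺`, the factorisation `U_U φ = φ * (A * log (…) - C_φ)`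
with `A = κ W / ln 2 > 0` shows that `U_U` is positive somewhere in `(0, 1)`. A positive value
beats every value close to `0` and the value `U_U 1 = -C_φ ≤ 0`, so the maximum of `U_U` over
a suitable compact interval `[u, 1]` is a maximum over all of `(0, 1)`.
-/

open Real Set Filter Topology

theorem exists_isMaxOn_Ioc_of_tendsto_nhdsGT {f : ℝ → ℝ} {a b l x₀ : ℝ}
    (hf : ContinuousOn f (Ioc a b)) (hlim : Tendsto f (𝓝[>] a) (𝓝 l))
    (hx₀ : x₀ ∈ Ioc a b) (hlx₀ : l < f x₀) :
    ∃ x ∈ Ioc a b, IsMaxOn f (Ioc a b) x := by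
  have hsmall : ∀ᶠ x in 𝓝[>] a, f x < f x₀ := hlim.eventually (eventually_lt_nhds hlx₀)
  obtain ⟨u, ⟨hau, hux₀⟩, hu⟩ :=
    (mem_nhdsGT_iff_exists_mem_Ioc_Ioo_subset hx₀.1).1 hsmall
  have hsub : Icc u b ⊆ Ioc a b := Icc_subset_Ioc hau le_rfl
  have hx₀u : x₀ ∈ Icc u b := ⟨hux₀, hx₀.2⟩
  obtain ⟨x, hx, hmax⟩ := isCompact_Icc.exists_isMaxOn ⟨x₀, hx₀u⟩ (hf.mono hsub)
  refine ⟨x, hsub hx, fun y hy => ?_⟩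
  rcases lt_or_ge y u with hyu | hyu
  · exact ((hu ⟨hy.1, hyu⟩).trans_le (isMaxOn_iff.1 hmax x₀ hx₀u)).le
  · exact hmax ⟨hyu, hy.2⟩

section

variable {c φ : ℝ}

theorem one_le_one_add_mul_one_sub_div (hc : 0 ≤ c) (hφ : φ ∈ Ioc 0 1) :
    1 ≤ 1 + c * (1 - φ) / φ := by
  have : 0 ≤ c * (1 - φ) / φ := div_nonneg (mul_nonneg hc (by linarith [hφ.2])) hφ.1.le
  linarith

theorem mul_log_one_add_mul_one_sub_div_nonneg (hc : 0 ≤ c) (hφ : φ ∈ Ioc 0 1) :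
    0 ≤ φ * log (1 + c * (1 - φ) / φ) :=
  mul_nonneg hφ.1.le (log_nonneg (one_le_one_add_mul_one_sub_div hc hφ))

theorem mul_log_one_add_mul_one_sub_div_le (hc : 0 ≤ c) (hφ : φ ∈ Ioc 0 1) :
    φ * log (1 + c * (1 - φ) / φ) ≤ φ * log (1 + c) - φ * log φ := by
  obtain ⟨hφ0, hφ1⟩ := hφ
  have hle : 1 + c * (1 - φ) / φ ≤ (1 + c) / φ := by
    rw [one_add_div hφ0.ne']
    exact div_le_div_of_nonneg_right (by nlinarith) hφ0.le
  calc φ * log (1 + c * (1 - φ) / φ)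
      ≤ φ * log ((1 + c) / φ) := by gcongr
    _ = φ * log (1 + c) - φ * log φ := by
        rw [log_div (by linarith) hφ0.ne', mul_sub]

theorem tendsto_mul_log_one_add_mul_one_sub_div (hc : 0 ≤ c) :
    Tendsto (fun φ => φ * log (1 + c * (1 - φ) / φ)) (𝓝[>] 0) (𝓝 0) := by
  have hupper : Tendsto (fun φ => φ * log (1 + c) - φ * log φ) (𝓝[>] 0) (𝓝 0) := by
    have hcont : Continuous fun φ : ℝ => φ * log (1 + c) - φ * log φ :=
      (continuous_mul_const _).sub continuous_mul_log
    simpa using (hcont.tendsto 0).mono_left nhdsWithin_le_nhds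
  have hIoc : ∀ᶠ φ in 𝓝[>] (0 : ℝ), φ ∈ Ioc 0 1 :=
    mem_of_superset (Ioo_mem_nhdsGT one_pos) Ioo_subset_Ioc_self
  exact tendsto_of_tendsto_of_tendsto_of_le_of_le' tendsto_const_nhds hupper
    (hIoc.mono fun _ => mul_log_one_add_mul_one_sub_div_nonneg hc)
    (hIoc.mono fun _ => mul_log_one_add_mul_one_sub_div_le hc)

theorem tendsto_log_one_add_mul_one_sub_div_atTop (hc : 0 < c) :
    Tendsto (fun φ => log (1 + c * (1 - φ) / φ)) (𝓝[>] 0) atTop := by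
  refine tendsto_log_atTop.comp (Tendsto.congr' ?_
    (tendsto_atTop_add_const_left _ (1 - c) (tendsto_inv_nhdsGT_zero.const_mul_atTop hc)))
  filter_upwards [self_mem_nhdsWithin] with φ (hφ : 0 < φ)
  field_simp
  ring

theorem continuousOn_mul_log_one_add_mul_one_sub_div (hc : 0 ≤ c) :
    ContinuousOn (fun φ => φ * log (1 + c * (1 - φ) / φ)) (Ioc 0 1) := by
  have hden : ∀ φ ∈ Ioc (0 : ℝ) 1, φ ≠ 0 := fun φ hφ => hφ.1.ne'
  refine continuousOn_id.mul (ContinuousOn.log (by fun_prop (disch := exact hden)) ?_)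
  exact fun φ hφ => (zero_lt_one.trans_le (one_le_one_add_mul_one_sub_div hc hφ)).ne'

theorem exists_mem_Ioo_mul_log_one_add_mul_one_sub_div_pos {A C : ℝ} (hA : 0 < A)
    (hc : 0 < c) :
    ∃ φ ∈ Ioo 0 1, 0 < A * (φ * log (1 + c * (1 - φ) / φ)) - C * φ := by
  obtain ⟨φ, hlog, hφ⟩ := ((tendsto_log_one_add_mul_one_sub_div_atTop hc).eventually_gt_atTop
    (C / A)).and (Ioo_mem_nhdsGT one_pos) |>.exists
  refine ⟨φ, hφ, ?_⟩
  have : C < A * log (1 + c * (1 - φ) / φ) := by rwa [div_lt_iff₀' hA] at hlog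
  linarith [mul_pos hφ.1 (sub_pos.2 this)]

end

theorem user_utility_limit_and_positive_max
    (κ W h Γ g N₀ Cφ p c : ℝ)
    (hκ : 0 < κ) (hW : 0 < W) (hh : 0 < h) (hΓ : 0 < Γ) (hg : 0 < g) (hN : 0 < N₀)
    (hCφ : 0 ≤ Cφ) (hp : 0 ≤ p) (hc : c = h * Γ / (g * p + N₀)) :
    Filter.Tendsto
      (fun φ => κ * W / Real.log 2 * (φ * Real.log (1 + c * (1 - φ) / φ)) - Cφ * φ)
      (nhdsWithin 0 (Set.Ioi 0)) (nhds 0) ∧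
    (Cφ < κ * W / Real.log 2 * (Real.log (1 + c) - c / (1 + c)) →
      ∃ φstar ∈ Set.Ioo (0:ℝ) 1,
        0 < κ * W / Real.log 2 * (φstar * Real.log (1 + c * (1 - φstar) / φstar)) - Cφ * φstar ∧
        ∀ φ ∈ Set.Ioo (0:ℝ) 1,
          κ * W / Real.log 2 * (φ * Real.log (1 + c * (1 - φ) / φ)) - Cφ * φ
            ≤ κ * W / Real.log 2 * (φstar * Real.log (1 + c * (1 - φstar) / φstar)) - Cφ * φstar) := by
  have hc0 : 0 < c := by rw [hc]; positivity
  have hA : 0 < κ * W / log 2 := div_pos (by positivity) (log_pos one_lt_two)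
  set U := fun φ => κ * W / log 2 * (φ * log (1 + c * (1 - φ) / φ)) - Cφ * φ
  have hcont : ContinuousOn U (Ioc 0 1) :=
    (continuousOn_const.mul (continuousOn_mul_log_one_add_mul_one_sub_div hc0.le)).sub
      (continuousOn_const.mul continuousOn_id)
  have hlim : Tendsto U (𝓝[>] 0) (𝓝 0) := by
    have hlinear : Tendsto (fun φ => Cφ * φ) (𝓝[>] 0) (𝓝 0) := by
      simpa using ((continuous_const_mul Cφ).tendsto 0).mono_left nhdsWithin_le_nhds
    simpa using ((tendsto_mul_log_one_add_mul_one_sub_div hc0.le).const_mul _).sub hlinear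
  refine ⟨hlim, fun _ => ?_⟩
  obtain ⟨φ₀, hφ₀, hpos⟩ :=
    exists_mem_Ioo_mul_log_one_add_mul_one_sub_div_pos (C := Cφ) hA hc0
  obtain ⟨ψ, hψ, hmax⟩ :=
    exists_isMaxOn_Ioc_of_tendsto_nhdsGT hcont hlim (Ioo_subset_Ioc_self hφ₀) hpos
  have hφ₀ψ : U φ₀ ≤ U ψ := hmax (Ioo_subset_Ioc_self hφ₀)
  have hψ1 : ψ ≠ 1 := by
    rintro rfl
    simp only [U, sub_self, mul_zero, zero_div, add_zero, log_one, mul_one] at hφ₀ψ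
    linarith
  exact ⟨ψ, ⟨hψ.1, hψ.2.lt_of_ne hψ1⟩, hpos.trans_le hφ₀ψ,
    fun φ hφ => hmax (Ioo_subset_Ioc_self hφ)⟩
end

section
/- The map ψ(φ) = log(1 + c(1-φ)/φ) − c/(φ + c(1-φ)) is strictly decreasing on (0,1), tends to +∞ as φ → 0⁺ and to −c as φ → 1⁻; hence for every real threshold t ∈ (−c, ∞) there is a unique φ* ∈ (0,1) with ψ(φ*) = t. -/
/-!
With `u = φ + c (1 - φ)`, the argument of the logarithm is `u / φ`, and a direct computation gives
`ψ' φ = -c² / (φ u²) < 0` on `(0, 1)`. As `φ → 0⁺` the logarithm blows up while `c / u → 1`;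
at `φ = 1` the function is continuous with value `log 1 - c = -c`. Strict monotonicity,
continuity and these two limits give existence (intermediate value theorem) and uniqueness of
`φ*` with `ψ φ* = t` for every `t > -c`.
-/

open Real Set Filter Topology

theorem StrictAntiOn.existsUnique_mem_Ioo_eq {f : ℝ → ℝ} {a b L : ℝ} (hab : a < b)
    (hf : StrictAntiOn f (Ioo a b)) (hf_cont : ContinuousOn f (Ioo a b))
    (h_left : Tendsto f (𝓝[>] a) atTop) (h_right : Tendsto f (𝓝[<] b) (𝓝 L))
    {t : ℝ} (ht : L < t) :
    ∃! x, x ∈ Ioo a b ∧ f x = t := by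
  obtain ⟨x, hx, hfx⟩ := isPreconnected_Ioo.intermediate_value_Ioi
    (le_principal_iff.2 (Ioo_mem_nhdsLT hab)) (le_principal_iff.2 (Ioo_mem_nhdsGT hab))
    hf_cont h_right h_left ht
  exact ⟨x, ⟨hx, hfx⟩, fun y hy => hf.injOn hy.1 hx (hy.2.trans hfx.symm)⟩

noncomputable def psi (c φ : ℝ) : ℝ :=
  log (1 + c * (1 - φ) / φ) - c / (φ + c * (1 - φ))

namespace psi

variable {c φ : ℝ}

theorem hasDerivAt (hφ : φ ≠ 0) (hu : φ + c * (1 - φ) ≠ 0) :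
    HasDerivAt (psi c) (-c ^ 2 / (φ * (φ + c * (1 - φ)) ^ 2)) φ := by
  have h_one_sub : HasDerivAt (fun x => 1 - x) (-1) φ := by
    simpa using (hasDerivAt_id' φ).const_sub 1
  have h_denom : HasDerivAt (fun x => x + c * (1 - x)) (1 - c) φ :=
    ((hasDerivAt_id' φ).add (h_one_sub.const_mul c)).congr_deriv (by ring)
  have h_arg : HasDerivAt (fun x => 1 + c * (1 - x) / x) (-c / φ ^ 2) φ :=
    (((h_one_sub.const_mul c).div (hasDerivAt_id' φ) hφ).const_add 1).congr_deriv
      (by field_simp; ring)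
  have h_arg_ne : 1 + c * (1 - φ) / φ ≠ 0 := by
    rw [one_add_div hφ]; exact div_ne_zero hu hφ
  exact ((h_arg.log h_arg_ne).sub ((hasDerivAt_const φ c).div h_denom hu)).congr_deriv
    (by field_simp; ring)

theorem denom_pos (hc : 0 ≤ c) (h₀ : 0 < φ) (h₁ : φ ≤ 1) : 0 < φ + c * (1 - φ) := by
  nlinarith

theorem continuousOn (hc : 0 ≤ c) : ContinuousOn (psi c) (Ioo 0 1) := fun _ hφ =>
  (hasDerivAt hφ.1.ne' (denom_pos hc hφ.1 hφ.2.le).ne').continuousAt.continuousWithinAt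

theorem strictAntiOn (hc : 0 < c) : StrictAntiOn (psi c) (Ioo 0 1) := by
  refine strictAntiOn_of_hasDerivWithinAt_neg (convex_Ioo 0 1) (continuousOn hc.le)
    (f' := fun φ => -c ^ 2 / (φ * (φ + c * (1 - φ)) ^ 2)) ?_ ?_
    <;> simp only [interior_Ioo]
  · exact fun _ hφ => (hasDerivAt hφ.1.ne' (denom_pos hc.le hφ.1 hφ.2.le).ne').hasDerivWithinAt
  · intro φ ⟨h₀, h₁⟩
    have := denom_pos hc.le h₀ h₁.le
    exact div_neg_of_neg_of_pos (neg_neg_of_pos (by positivity)) (by positivity)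

theorem tendsto_nhdsGT_zero (hc : 0 < c) : Tendsto (psi c) (𝓝[>] 0) atTop := by
  have h_lim {f : ℝ → ℝ} (hf : Continuous f) : Tendsto f (𝓝[>] 0) (𝓝 (f 0)) :=
    hf.continuousWithinAt.tendsto
  have h_num : Tendsto (fun φ : ℝ => c * (1 - φ)) (𝓝[>] 0) (𝓝 c) := by
    simpa using h_lim (f := fun φ => c * (1 - φ)) (by fun_prop)
  have h_denom : Tendsto (fun φ : ℝ => φ + c * (1 - φ)) (𝓝[>] 0) (𝓝 c) := by
    simpa using h_lim (f := fun φ => φ + c * (1 - φ)) (by fun_prop)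
  have h_log : Tendsto (fun φ => log (1 + c * (1 - φ) / φ)) (𝓝[>] 0) atTop :=
    tendsto_log_atTop.comp <| tendsto_atTop_add_const_left _ 1 <|
      h_num.pos_mul_atTop hc tendsto_inv_nhdsGT_zero
  have h_frac : Tendsto (fun φ => c / (φ + c * (1 - φ))) (𝓝[>] 0) (𝓝 1) := by
    have := (tendsto_const_nhds (x := c)).div h_denom hc.ne'
    rwa [div_self hc.ne'] at this
  exact (h_log.atTop_add h_frac.neg).congr fun _ => (sub_eq_add_neg _ _).symm

theorem tendsto_nhdsLT_one (c : ℝ) : Tendsto (psi c) (𝓝[<] 1) (𝓝 (-c)) := by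
  have h_cont := (hasDerivAt (c := c) one_ne_zero (by simp)).continuousAt
  simpa [psi] using h_cont.tendsto.mono_left nhdsWithin_le_nhds

end psi

theorem psi_strictly_decreasing_and_bijective
    (c : ℝ) (hc : 0 < c) :
    StrictAntiOn (fun φ => Real.log (1 + c * (1 - φ) / φ) - c / (φ + c * (1 - φ)))
      (Set.Ioo (0:ℝ) 1) ∧
    Filter.Tendsto (fun φ => Real.log (1 + c * (1 - φ) / φ) - c / (φ + c * (1 - φ)))
      (nhdsWithin 0 (Set.Ioi 0)) Filter.atTop ∧
    Filter.Tendsto (fun φ => Real.log (1 + c * (1 - φ) / φ) - c / (φ + c * (1 - φ)))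
      (nhdsWithin 1 (Set.Iio 1)) (nhds (-c)) ∧
    ∀ t ∈ Set.Ioi (-c), ∃! φ, φ ∈ Set.Ioo (0:ℝ) 1 ∧
      Real.log (1 + c * (1 - φ) / φ) - c / (φ + c * (1 - φ)) = t :=
  ⟨psi.strictAntiOn hc, psi.tendsto_nhdsGT_zero hc, psi.tendsto_nhdsLT_one c, fun _ ht =>
    (psi.strictAntiOn hc).existsUnique_mem_Ioo_eq one_pos (psi.continuousOn hc.le)
      (psi.tendsto_nhdsGT_zero hc) (psi.tendsto_nhdsLT_one c) ht⟩
end
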